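/- arXiv:2503.11865 — 8 statements merged into one kernel-verified Lean document; each statement's English description precedes it below -/
import Mathlib

section
/- Let V be an open connected neighborhood of (0,0) ∈ ℝ² with coordinates (y, z) and let R : V → ℝ be a smooth function satisfying, for all (y,z) ∈ V: R_y·(R − zR_z − yR_y) − 1 = 0 and R_z·(R − zR_z − yR_y) + R_y = 0. Then c := R(0,0) ≠ 0, and on some neighborhood of (0,0) one has R(y,z) = y/c − z/c² + c. -/
open Set

/-- **Theorem.** A smooth solution of the system `R_y(R − zR_z − yR_y) = 1`,
`R_z(R − zR_z − yR_y) = −R_y` on a connected neighborhood `V` of the origin satisfies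
`c := R(0,0) ≠ 0` and `R(y,z) = y/c − z/c² + c` near the origin.  Here the first
coordinate is `y`, the second is `z`. -/
theorem sigma1_morse_pde_solution
    (V : Set (ℝ × ℝ)) (hV : IsOpen V) (hVconn : IsConnected V)
    (h0V : ((0 : ℝ), (0 : ℝ)) ∈ V)
    (R : ℝ × ℝ → ℝ) (hR : ContDiffOn ℝ (⊤ : ℕ∞) R V)
    (h1 : ∀ p ∈ V,
      fderiv ℝ R p (1, 0) *
        (R p - p.2 * fderiv ℝ R p (0, 1) - p.1 * fderiv ℝ R p (1, 0)) - 1 = 0)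
    (h2 : ∀ p ∈ V,
      fderiv ℝ R p (0, 1) *
        (R p - p.2 * fderiv ℝ R p (0, 1) - p.1 * fderiv ℝ R p (1, 0))
        + fderiv ℝ R p (1, 0) = 0) :
    R (0, 0) ≠ 0 ∧
    ∃ V' : Set (ℝ × ℝ), IsOpen V' ∧ ((0 : ℝ), (0 : ℝ)) ∈ V' ∧ V' ⊆ V ∧
      ∀ p ∈ V', R p = p.1 / R (0, 0) - p.2 / (R (0, 0)) ^ 2 + R (0, 0) := by
  classical
  set a : ℝ × ℝ → ℝ := fun p => fderiv ℝ R p (1, 0) with ha_def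
  -- pointwise algebraic consequences
  have key : ∀ p ∈ V, a p ≠ 0 ∧ fderiv ℝ R p (0, 1) = -(a p * a p) ∧
      R p = p.1 * a p - p.2 * (a p * a p) + (a p)⁻¹ := by
    intro p hp
    have e1 := h1 p hp
    have e2 := h2 p hp
    set A := fderiv ℝ R p (1, 0) with hA
    set Z := fderiv ℝ R p (0, 1) with hZ
    have hAne : A ≠ 0 := by
      intro h
      rw [h] at e1; norm_num at e1
    have e1' : A * (R p - p.2 * Z - p.1 * A) = 1 := by linarith
    have e2' : Z * (R p - p.2 * Z - p.1 * A) = -A := by linarith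
    have hZval : Z = -(A * A) := by
      calc Z = Z * (A * (R p - p.2 * Z - p.1 * A)) := by rw [e1', mul_one]
        _ = (Z * (R p - p.2 * Z - p.1 * A)) * A := by ring
        _ = -A * A := by rw [e2']
        _ = -(A * A) := by ring
    have hu : R p - p.2 * Z - p.1 * A = A⁻¹ := eq_inv_of_mul_eq_one_left (by linarith [e1'] )
    refine ⟨hAne, hZval, ?_⟩
    have : R p = p.1 * A + p.2 * Z + A⁻¹ := by linarith [hu]
    rw [this, hZval]; ring
  -- smoothness of a
  have haC : ∀ p ∈ V, ContDiffAt ℝ (⊤ : ℕ∞) a p := by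
    intro p hp
    have h : ContDiffAt ℝ (⊤ : ℕ∞) (fderiv ℝ R) p :=
      (hR.contDiffAt (hV.mem_nhds hp)).fderiv_right (by simp)
    exact ((ContinuousLinearMap.apply ℝ ℝ ((1 : ℝ), (0 : ℝ))).contDiff.contDiffAt).comp p h
  have hkey0 := key _ h0V
  have ha0 : a (0, 0) ≠ 0 := hkey0.1
  have hc : R (0, 0) = (a (0, 0))⁻¹ := by
    have := hkey0.2.2; simpa using this
  have hcne : R (0, 0) ≠ 0 := by rw [hc]; exact inv_ne_zero ha0
  refine ⟨hcne, ?_⟩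
  -- the factor function
  set φ : ℝ × ℝ → ℝ := fun p => -p.1 + 2 * p.2 * a p + (a p * a p)⁻¹ with hφ_def
  have hφcont : ContinuousAt φ (0, 0) := by
    have hac : ContinuousAt a (0, 0) := (haC _ h0V).continuousAt
    exact (((continuousAt_fst.neg).add
      (((continuousAt_const.mul continuousAt_snd).mul hac))).add
      ((hac.mul hac).inv₀ (mul_ne_zero ha0 ha0)))
  have hφ0 : φ (0, 0) ≠ 0 := by
    simp only [hφ_def]
    simpa using inv_ne_zero (mul_ne_zero ha0 ha0)
  have hev : ∀ᶠ q in nhds ((0 : ℝ), (0 : ℝ)), φ q ≠ 0 ∧ q ∈ V :=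
    (hφcont.eventually_ne hφ0).and (hV.mem_nhds h0V)
  obtain ⟨r, hr, hball⟩ := Metric.mem_nhds_iff.1 hev
  have hballV : Metric.ball ((0 : ℝ), (0 : ℝ)) r ⊆ V := fun q hq => (hball hq).2
  -- derivative of a vanishes on the ball
  have hDzero : ∀ p ∈ Metric.ball ((0 : ℝ), (0 : ℝ)) r, fderiv ℝ a p = 0 := by
    intro p hp
    have hpV : p ∈ V := hballV hp
    have hane : a p ≠ 0 := (key p hpV).1
    have hD : HasFDerivAt a (fderiv ℝ a p) p :=
      ((haC p hpV).differentiableAt (by simp)).hasFDerivAt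
    set D := fderiv ℝ a p with hD_def
    have hRd : HasFDerivAt R (fderiv ℝ R p) p :=
      ((hR.contDiffAt (hV.mem_nhds hpV)).differentiableAt (by simp)).hasFDerivAt
    -- G := R - y*a + z*a² - a⁻¹ vanishes on V
    set G : ℝ × ℝ → ℝ := fun q => R q - q.1 * a q + q.2 * (a q * a q) - (a q)⁻¹ with hG_def
    have hG0 : ∀ q ∈ V, G q = 0 := by
      intro q hq
      have := (key q hq).2.2
      simp only [hG_def]; linarith
    have hGd : HasFDerivAt G
        (fderiv ℝ R p - (p.1 • D + a p • ContinuousLinearMap.fst ℝ ℝ ℝ) +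
          (p.2 • (a p • D + a p • D) + (a p * a p) • ContinuousLinearMap.snd ℝ ℝ ℝ) -
          (ContinuousLinearMap.smulRight (1 : ℝ →L[ℝ] ℝ) (-(a p ^ 2)⁻¹)).comp D) p := by
      exact ((hRd.sub (hasFDerivAt_fst.mul hD)).add (hasFDerivAt_snd.mul (hD.mul hD))).sub
        ((hasFDerivAt_inv hane).comp p hD)
    have hGzero : HasFDerivAt G (0 : ℝ × ℝ →L[ℝ] ℝ) p := by
      have : G =ᶠ[nhds p] fun _ => (0 : ℝ) :=
        Filter.eventuallyEq_of_mem (hV.mem_nhds hpV) hG0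
      exact (hasFDerivAt_const (0 : ℝ) p).congr_of_eventuallyEq this
    have hEq := hGd.unique hGzero
    have hRy : fderiv ℝ R p (1, 0) = a p := rfl
    have hRz : fderiv ℝ R p (0, 1) = -(a p * a p) := (key p hpV).2.1
    have hφne : φ p ≠ 0 := (hball hp).1
    have hval : ∀ v : ℝ × ℝ,
        fderiv ℝ R p v - (p.1 * D v + a p * v.1) +
          (p.2 * (a p * D v) + p.2 * (a p * D v) + a p * a p * v.2) +
          D v * (a p ^ 2)⁻¹ = 0 := by
      intro v
      have := congrFun (congrArg DFunLike.coe hEq) v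
      simpa [ContinuousLinearMap.sub_apply, ContinuousLinearMap.add_apply,
        ContinuousLinearMap.smul_apply, ContinuousLinearMap.comp_apply,
        ContinuousLinearMap.smulRight_apply, ContinuousLinearMap.one_apply,
        ContinuousLinearMap.coe_fst', ContinuousLinearMap.coe_snd',
        smul_eq_mul] using this
    have h10 := hval (1, 0)
    have h01 := hval (0, 1)
    rw [hRy] at h10
    rw [hRz] at h01
    norm_num at h10 h01
    have hfac : ((a p) ^ 2)⁻¹ = (a p * a p)⁻¹ := by rw [sq]
    have hD1 : D (1, 0) = 0 := by
      have hmul : D (1, 0) * φ p = 0 := by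
        simp only [hφ_def]
        rw [← hfac]; linear_combination h10
      exact (mul_eq_zero.1 hmul).resolve_right hφne
    have hD2 : D (0, 1) = 0 := by
      have hmul : D (0, 1) * φ p = 0 := by
        simp only [hφ_def]
        rw [← hfac]; linear_combination h01
      exact (mul_eq_zero.1 hmul).resolve_right hφne
    refine ContinuousLinearMap.ext fun v => ?_
    have hv : v = v.1 • ((1 : ℝ), (0 : ℝ)) + v.2 • ((0 : ℝ), (1 : ℝ)) := by
      ext <;> simp
    rw [hv, map_add, map_smul, map_smul, hD1, hD2]
    simp
  -- a is constant on the ball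
  have haconst : ∀ p ∈ Metric.ball ((0 : ℝ), (0 : ℝ)) r, a p = a (0, 0) := by
    intro p hp
    have hdiff : DifferentiableOn ℝ a (Metric.ball ((0 : ℝ), (0 : ℝ)) r) := fun q hq =>
      ((haC q (hballV hq)).differentiableAt (by simp)).differentiableWithinAt
    exact (convex_ball _ _).is_const_of_fderivWithin_eq_zero hdiff
      (fun q hq => by
        rw [fderivWithin_of_isOpen Metric.isOpen_ball hq]; exact hDzero q hq)
      hp (Metric.mem_ball_self hr)
  refine ⟨Metric.ball ((0 : ℝ), (0 : ℝ)) r, Metric.isOpen_ball, Metric.mem_ball_self hr,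
    hballV, ?_⟩
  intro p hp
  have hRp := (key p (hballV hp)).2.2
  rw [haconst p hp] at hRp
  have hc' : a (0, 0) = (R (0, 0))⁻¹ := by rw [hc, inv_inv]
  rw [hRp, hc', inv_inv]
  field_simp
end

section
/- Let V be an open connected neighborhood of (0,0) ∈ ℝ² with coordinates (x, z) and let R : V → ℝ be a smooth function satisfying, for all (x,z) ∈ V: R + (R_x)² − xR_x − zR_z = 0 and R_x·R_z − 1 = 0, where R_x, R_z denote the partial derivatives of R. Then there exists a constant c₁ ≠ 0 such that R(x,z) = c₁x + z/c₁ − c₁² on some neighborhood of (0,0); in particular R(0,0) = −c₁² < 0. -/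
open Set

/-- **Theorem.** A smooth solution of `R + (R_x)² − xR_x − zR_z = 0`, `R_x·R_z = 1` on a
connected neighborhood `V` of the origin has the form `R(x,z) = c₁x + z/c₁ − c₁²` near
the origin for some `c₁ ≠ 0`; in particular `R(0,0) = −c₁² < 0`.  Here the first
coordinate is `x`, the second is `z`. -/
theorem sigma2_morse_pde_solution
    (V : Set (ℝ × ℝ)) (hV : IsOpen V) (hVconn : IsConnected V)
    (h0V : ((0 : ℝ), (0 : ℝ)) ∈ V)
    (R : ℝ × ℝ → ℝ) (hR : ContDiffOn ℝ (⊤ : ℕ∞) R V)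
    (h1 : ∀ p ∈ V,
      R p + (fderiv ℝ R p (1, 0)) ^ 2 - p.1 * fderiv ℝ R p (1, 0)
        - p.2 * fderiv ℝ R p (0, 1) = 0)
    (h2 : ∀ p ∈ V, fderiv ℝ R p (1, 0) * fderiv ℝ R p (0, 1) - 1 = 0) :
    ∃ c₁ : ℝ, c₁ ≠ 0 ∧ R (0, 0) = -c₁ ^ 2 ∧ R (0, 0) < 0 ∧
      ∃ V' : Set (ℝ × ℝ), IsOpen V' ∧ ((0 : ℝ), (0 : ℝ)) ∈ V' ∧ V' ⊆ V ∧
        ∀ p ∈ V', R p = c₁ * p.1 + p.2 / c₁ - c₁ ^ 2 := by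
  set u : ℝ × ℝ → ℝ := fun p => fderiv ℝ R p (1, 0) with hu_def
  set v : ℝ × ℝ → ℝ := fun p => fderiv ℝ R p (0, 1) with hv_def
  -- the derivative of R is smooth on V
  have hD : ContDiffOn ℝ (⊤ : ℕ∞) (fun p => fderiv ℝ R p) V :=
    hR.fderiv_of_isOpen hV (by simp)
  have hDdiff : DifferentiableOn ℝ (fun p => fderiv ℝ R p) V :=
    hD.differentiableOn (by simp)
  have hRdiff : DifferentiableOn ℝ R V := hR.differentiableOn (by simp)
  -- u and v are differentiable at points of V
  have hu_diff : ∀ p ∈ V, DifferentiableAt ℝ u p := fun p hp =>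
    (hDdiff.differentiableAt (hV.mem_nhds hp)).clm_apply (differentiableAt_const _)
  have hv_diff : ∀ p ∈ V, DifferentiableAt ℝ v p := fun p hp =>
    (hDdiff.differentiableAt (hV.mem_nhds hp)).clm_apply (differentiableAt_const _)
  -- u, v continuous on V
  have hu_c : ContinuousOn u V := (hD.continuousOn).clm_apply continuousOn_const
  have hv_c : ContinuousOn v V := (hD.continuousOn).clm_apply continuousOn_const
  -- linearity of the derivative
  have key : ∀ p ∈ V, ∀ w : ℝ × ℝ, fderiv ℝ R p w = w.1 * u p + w.2 * v p := by
    intro p hp w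
    have hw : w = w.1 • ((1 : ℝ), (0 : ℝ)) + w.2 • ((0 : ℝ), (1 : ℝ)) := by
      ext <;> simp
    conv_lhs => rw [hw]
    rw [map_add, map_smul, map_smul]
    simp [hu_def, hv_def, smul_eq_mul]
  -- first differentiated equation
  have eqC : ∀ p ∈ V, ∀ w : ℝ × ℝ,
      2 * u p * fderiv ℝ u p w - p.1 * fderiv ℝ u p w - p.2 * fderiv ℝ v p w = 0 := by
    intro p hp w
    have hR_at : HasFDerivAt R (fderiv ℝ R p) p :=
      (hRdiff.differentiableAt (hV.mem_nhds hp)).hasFDerivAt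
    have hu_at : HasFDerivAt u (fderiv ℝ u p) p := (hu_diff p hp).hasFDerivAt
    have hv_at : HasFDerivAt v (fderiv ℝ v p) p := (hv_diff p hp).hasFDerivAt
    have hG : HasFDerivAt (fun q => R q + u q * u q - q.1 * u q - q.2 * v q)
        (fderiv ℝ R p + (u p • fderiv ℝ u p + u p • fderiv ℝ u p)
          - (p.1 • fderiv ℝ u p + u p • ContinuousLinearMap.fst ℝ ℝ ℝ)
          - (p.2 • fderiv ℝ v p + v p • ContinuousLinearMap.snd ℝ ℝ ℝ)) p :=
      ((hR_at.add (hu_at.mul hu_at)).sub (hasFDerivAt_fst.mul hu_at)).sub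
        (hasFDerivAt_snd.mul hv_at)
    have hzero : HasFDerivAt (fun q => R q + u q * u q - q.1 * u q - q.2 * v q)
        (0 : ℝ × ℝ →L[ℝ] ℝ) p := by
      refine (hasFDerivAt_const (0 : ℝ) p).congr_of_eventuallyEq ?_
      filter_upwards [hV.mem_nhds hp] with q hq
      have := h1 q hq
      nlinarith [this, sq_nonneg (u q)]
    have := hG.unique hzero
    have happ := congrArg (fun L : ℝ × ℝ →L[ℝ] ℝ => L w) this
    simp only [ContinuousLinearMap.add_apply, ContinuousLinearMap.sub_apply,
      ContinuousLinearMap.coe_smul', Pi.smul_apply, ContinuousLinearMap.zero_apply,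
      ContinuousLinearMap.coe_fst', ContinuousLinearMap.coe_snd', smul_eq_mul] at happ
    have hk := key p hp w
    linarith [happ, hk]
  -- second differentiated equation
  have eqD : ∀ p ∈ V, ∀ w : ℝ × ℝ,
      u p * fderiv ℝ v p w + v p * fderiv ℝ u p w = 0 := by
    intro p hp w
    have hu_at : HasFDerivAt u (fderiv ℝ u p) p := (hu_diff p hp).hasFDerivAt
    have hv_at : HasFDerivAt v (fderiv ℝ v p) p := (hv_diff p hp).hasFDerivAt
    have hG : HasFDerivAt (fun q => u q * v q - 1)
        ((u p • fderiv ℝ v p + v p • fderiv ℝ u p) - 0) p :=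
      (hu_at.mul hv_at).sub (hasFDerivAt_const (1 : ℝ) p)
    have hzero : HasFDerivAt (fun q => u q * v q - 1) (0 : ℝ × ℝ →L[ℝ] ℝ) p := by
      refine (hasFDerivAt_const (0 : ℝ) p).congr_of_eventuallyEq ?_
      filter_upwards [hV.mem_nhds hp] with q hq
      exact h2 q hq
    have := hG.unique hzero
    have happ := congrArg (fun L : ℝ × ℝ →L[ℝ] ℝ => L w) this
    simp only [ContinuousLinearMap.sub_apply, ContinuousLinearMap.add_apply,
      ContinuousLinearMap.coe_smul', Pi.smul_apply, ContinuousLinearMap.zero_apply,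
      smul_eq_mul, sub_zero] at happ
    linarith [happ]
  -- the factor ψ
  set ψ : ℝ × ℝ → ℝ := fun p => 2 * u p ^ 2 - p.1 * u p + p.2 * v p with hψ_def
  have hψ_c : ContinuousOn ψ V := by
    apply ContinuousOn.add
    · exact (continuousOn_const.mul (hu_c.pow 2)).sub (continuousOn_fst.mul hu_c)
    · exact continuousOn_snd.mul hv_c
  have hu0 : u (0, 0) * v (0, 0) = 1 := by
    have := h2 (0, 0) h0V; linarith
  have hc₁ : u (0, 0) ≠ 0 := by
    intro h; rw [h] at hu0; simp at hu0
  have hψ0 : ψ ((0 : ℝ), (0 : ℝ)) ≠ 0 := by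
    simp only [hψ_def]
    norm_num
    exact hc₁
  have hψ_at : ContinuousAt ψ ((0 : ℝ), (0 : ℝ)) :=
    hψ_c.continuousAt (hV.mem_nhds h0V)
  have hev : ∀ᶠ q in nhds ((0 : ℝ), (0 : ℝ)), ψ q ≠ 0 := hψ_at.eventually_ne hψ0
  obtain ⟨ε, hε, hball⟩ := Metric.mem_nhds_iff.1
    (Filter.inter_mem (hev.and (Filter.eventually_of_mem (hV.mem_nhds h0V) fun q hq => hq))
      (hV.mem_nhds h0V))
  set B := Metric.ball ((0 : ℝ), (0 : ℝ)) ε with hB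
  have hBV : B ⊆ V := fun q hq => (hball hq).2
  have hBψ : ∀ q ∈ B, ψ q ≠ 0 := fun q hq => (hball hq).1.1
  have h0B : ((0 : ℝ), (0 : ℝ)) ∈ B := Metric.mem_ball_self hε
  -- the derivative of u vanishes on B
  have hDu0 : ∀ p ∈ B, fderiv ℝ u p = 0 := by
    intro p hp
    refine ContinuousLinearMap.ext fun w => ?_
    have hC := eqC p (hBV hp) w
    have hD' := eqD p (hBV hp) w
    have hψp := hBψ p hp
    have hz : ψ p * fderiv ℝ u p w = 0 := by
      simp only [hψ_def]
      linear_combination u p * hC + p.2 * hD'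
    have := (mul_eq_zero.1 hz).resolve_left hψp
    simpa using this
  -- hence u is constant on B
  have hconv : Convex ℝ B := convex_ball _ _
  have hUdiffB : DifferentiableOn ℝ u B := fun q hq =>
    (hu_diff q (hBV hq)).differentiableWithinAt
  have hconst : ∀ p ∈ B, u p = u (0, 0) := by
    intro p hp
    exact hconv.is_const_of_fderivWithin_eq_zero hUdiffB
      (fun q hq => by rw [fderivWithin_of_isOpen Metric.isOpen_ball hq]; exact hDu0 q hq) hp h0B
  -- the explicit form of R on B
  have hform : ∀ p ∈ B, R p = u (0, 0) * p.1 + p.2 / u (0, 0) - u (0, 0) ^ 2 := by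
    intro p hp
    have hup : u p = u (0, 0) := hconst p hp
    have hvp : v p = 1 / u (0, 0) := by
      have h2p := h2 p (hBV hp)
      have : u p * v p = 1 := by
        simpa [hu_def, hv_def] using sub_eq_zero.1 h2p
      rw [hup] at this
      rw [eq_div_iff hc₁]
      linear_combination this
    have h1p := h1 p (hBV hp)
    have h1p' : R p + u p ^ 2 - p.1 * u p - p.2 * v p = 0 := h1p
    rw [hup, hvp] at h1p'
    rw [div_eq_mul_one_div]
    nlinarith [h1p']
  have hR00 : R (0, 0) = -u (0, 0) ^ 2 := by
    have := hform (0, 0) h0B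
    simpa using this
  refine ⟨u (0, 0), hc₁, hR00, ?_, B, Metric.isOpen_ball, h0B, hBV, hform⟩
  rw [hR00]
  have : 0 < u (0, 0) ^ 2 := by positivity
  linarith
end

section
/- Let V be an open connected neighborhood of (0,0) ∈ ℝ² with coordinates (x, y) and let R : V → ℝ be a smooth function satisfying, for all (x,y) ∈ V: R_x·R_y − yR_y − xR_x + R = 0 and R_x + (R_y)² = 0, where R_x, R_y denote the partial derivatives of R, and set c := R(0,0). Then on some neighborhood of (0,0) one has R(x,y) = c^{1/3}·y − c^{2/3}·x + c, where c^{1/3} denotes the real cube root of c and c^{2/3} = (c^{1/3})². -/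
open Set Topology Filter

private lemma clm_eval_R2 (L : ℝ × ℝ →L[ℝ] ℝ) (v : ℝ × ℝ) :
    L v = v.1 * L (1, 0) + v.2 * L (0, 1) := by
  have hv : v = v.1 • ((1:ℝ), (0:ℝ)) + v.2 • ((0:ℝ), (1:ℝ)) := by
    ext <;> simp
  calc L v = L (v.1 • ((1:ℝ), (0:ℝ)) + v.2 • ((0:ℝ), (1:ℝ))) := by rw [← hv]
    _ = v.1 * L (1, 0) + v.2 * L (0, 1) := by
        rw [map_add, map_smul, map_smul, smul_eq_mul, smul_eq_mul]

/-- **Theorem.** A smooth solution of `R_x·R_y − yR_y − xR_x + R = 0`, `R_x + (R_y)² = 0`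
on a connected neighborhood `V` of the origin has, near the origin, the form
`R(x,y) = c^(1/3)·y − c^(2/3)·x + c` with `c = R(0,0)`; here `r` with `r³ = c` is the
real cube root `c^(1/3)` and `r² = c^(2/3)`.  The first coordinate is `x`, the second
is `y`. -/
theorem sigma3_morse_pde_solution
    (V : Set (ℝ × ℝ)) (hV : IsOpen V) (hVconn : IsConnected V)
    (h0V : ((0 : ℝ), (0 : ℝ)) ∈ V)
    (R : ℝ × ℝ → ℝ) (hR : ContDiffOn ℝ (⊤ : ℕ∞) R V)
    (h1 : ∀ p ∈ V,
      fderiv ℝ R p (1, 0) * fderiv ℝ R p (0, 1) - p.2 * fderiv ℝ R p (0, 1)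
        - p.1 * fderiv ℝ R p (1, 0) + R p = 0)
    (h2 : ∀ p ∈ V, fderiv ℝ R p (1, 0) + (fderiv ℝ R p (0, 1)) ^ 2 = 0) :
    ∃ r : ℝ, r ^ 3 = R (0, 0) ∧
      ∃ V' : Set (ℝ × ℝ), IsOpen V' ∧ ((0 : ℝ), (0 : ℝ)) ∈ V' ∧ V' ⊆ V ∧
        ∀ p ∈ V', R p = r * p.2 - r ^ 2 * p.1 + R (0, 0) := by
  classical
  -- the function q = R_y
  set q : ℝ × ℝ → ℝ := fun p => fderiv ℝ R p (0, 1) with hqdef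
  have hq_eval : ∀ p, q p = fderiv ℝ R p (0, 1) := fun p => rfl
  -- smoothness of q
  have hfd : ContDiffOn ℝ (⊤ : ℕ∞) (fun p => fderiv ℝ R p) V := hR.fderiv_of_isOpen hV (by simp)
  have hqC : ContDiffOn ℝ (⊤ : ℕ∞) q V := hfd.clm_apply contDiffOn_const
  have hqdiff : ∀ p ∈ V, DifferentiableAt ℝ q p := fun p hp =>
    (hqC.differentiableOn (by simp)).differentiableAt (hV.mem_nhds hp)
  have hRdiff : ∀ p ∈ V, DifferentiableAt ℝ R p := fun p hp =>
    (hR.differentiableOn (by simp)).differentiableAt (hV.mem_nhds hp)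
  -- algebraic consequences
  have hRx : ∀ p ∈ V, fderiv ℝ R p (1, 0) = -(q p) ^ 2 := by
    intro p hp
    have := h2 p hp
    rw [hq_eval]; linarith
  have hReq : ∀ p ∈ V, R p = q p * q p * q p + p.2 * q p - p.1 * (q p * q p) := by
    intro p hp
    have e1 := h1 p hp
    have e2 := h2 p hp
    rw [hq_eval]
    linear_combination e1 + (p.1 - fderiv ℝ R p (0, 1)) * e2
  -- key differentiated identity
  have key : ∀ p ∈ V, ∀ v : ℝ × ℝ,
      fderiv ℝ R p v = (3 * q p * q p + p.2 - 2 * p.1 * q p) * fderiv ℝ q p v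
        + v.2 * q p - v.1 * (q p * q p) := by
    intro p hp v
    have hq' : HasFDerivAt q (fderiv ℝ q p) p := (hqdiff p hp).hasFDerivAt
    have hR' : HasFDerivAt R (fderiv ℝ R p) p := (hRdiff p hp).hasFDerivAt
    have hE := ((hR'.sub ((hq'.mul hq').mul hq')).sub (hasFDerivAt_snd.mul hq')).add
      (hasFDerivAt_fst.mul (hq'.mul hq'))
    have hG0 : HasFDerivAt
        (fun p => R p - q p * q p * q p - p.2 * q p + p.1 * (q p * q p))
        (0 : ℝ × ℝ →L[ℝ] ℝ) p := by
      refine (hasFDerivAt_const (0:ℝ) p).congr_of_eventuallyEq ?_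
      filter_upwards [hV.mem_nhds hp] with p' hp'
      have := hReq p' hp'; linarith
    have hun := hE.unique hG0
    have happ := congrArg (fun (L : ℝ × ℝ →L[ℝ] ℝ) => L v) hun
    simp only [ContinuousLinearMap.add_apply, ContinuousLinearMap.sub_apply,
      ContinuousLinearMap.smul_apply, ContinuousLinearMap.zero_apply, smul_eq_mul,
      ContinuousLinearMap.coe_fst', ContinuousLinearMap.coe_snd', Pi.mul_apply] at happ
    linear_combination happ
  -- the two consequences: q_x * D = 0 and q_y * D = 0
  have hqxD : ∀ p ∈ V,
      fderiv ℝ q p (1, 0) * (3 * q p * q p + p.2 - 2 * p.1 * q p) = 0 := by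
    intro p hp
    have h := key p hp (1, 0)
    rw [hRx p hp] at h
    norm_num at h
    linear_combination -h
  have hqyD : ∀ p ∈ V,
      fderiv ℝ q p (0, 1) * (3 * q p * q p + p.2 - 2 * p.1 * q p) = 0 := by
    intro p hp
    have h := key p hp (0, 1)
    rw [← hq_eval p] at h
    norm_num at h
    rcases h with h | h
    · rw [h, mul_zero]
    · rw [h, zero_mul]
  -- derivative of D in the y-direction on open sets where D vanishes
  have hDkey : ∀ p ∈ V, (∀ᶠ p' in 𝓝 p, 3 * q p' * q p' + p'.2 - 2 * p'.1 * q p' = 0) →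
      (6 * q p - 2 * p.1) * fderiv ℝ q p (0, 1) + 1 = 0 := by
    intro p hp hev
    have hq' : HasFDerivAt q (fderiv ℝ q p) p := (hqdiff p hp).hasFDerivAt
    have hE := (((hq'.const_mul (3:ℝ)).mul hq').add hasFDerivAt_snd).sub
      ((hasFDerivAt_fst.const_mul (2:ℝ)).mul hq')
    have hG0 : HasFDerivAt (fun p : ℝ × ℝ => 3 * q p * q p + p.2 - 2 * p.1 * q p)
        (0 : ℝ × ℝ →L[ℝ] ℝ) p := by
      refine (hasFDerivAt_const (0:ℝ) p).congr_of_eventuallyEq ?_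
      filter_upwards [hev] with p' h'
      exact h'
    have hun := hE.unique hG0
    have happ := congrArg (fun (L : ℝ × ℝ →L[ℝ] ℝ) => L ((0:ℝ), (1:ℝ))) hun
    simp only [ContinuousLinearMap.add_apply, ContinuousLinearMap.sub_apply,
      ContinuousLinearMap.smul_apply, ContinuousLinearMap.zero_apply, smul_eq_mul,
      ContinuousLinearMap.coe_fst', ContinuousLinearMap.coe_snd'] at happ
    norm_num at happ
    linear_combination happ
  -- abbreviations for the partials of q
  set qx : ℝ × ℝ → ℝ := fun p => fderiv ℝ q p (1, 0) with hqxdef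
  set qy : ℝ × ℝ → ℝ := fun p => fderiv ℝ q p (0, 1) with hqydef
  have hqx_eval : ∀ p, qx p = fderiv ℝ q p (1, 0) := fun _ => rfl
  have hqy_eval : ∀ p, qy p = fderiv ℝ q p (0, 1) := fun _ => rfl
  have hfd2 : ContDiffOn ℝ (⊤ : ℕ∞) (fun p => fderiv ℝ q p) V := hqC.fderiv_of_isOpen hV (by simp)
  have hqyC : ContinuousOn qy V := (hfd2.clm_apply contDiffOn_const).continuousOn
  have hqxC : ContinuousOn qx V := (hfd2.clm_apply contDiffOn_const).continuousOn
  -- choose a small ball around the origin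
  set r : ℝ := q (0, 0) with hrdef
  have hO : IsOpen (V ∩ q ⁻¹' Metric.ball r 1) :=
    hqC.continuousOn.isOpen_inter_preimage hV Metric.isOpen_ball
  have h0O : ((0:ℝ), (0:ℝ)) ∈ V ∩ q ⁻¹' Metric.ball r 1 :=
    ⟨h0V, by simp [Metric.mem_ball, hrdef]⟩
  obtain ⟨ρ₀, hρ₀, hball₀⟩ := Metric.isOpen_iff.mp hO _ h0O
  set ρ : ℝ := min ρ₀ 1 with hρdef
  have hρ : 0 < ρ := lt_min hρ₀ one_pos
  have hρ1 : ρ ≤ 1 := min_le_right _ _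
  set B : Set (ℝ × ℝ) := Metric.ball ((0:ℝ), (0:ℝ)) ρ with hBdef
  have hBO : B ⊆ V ∩ q ⁻¹' Metric.ball r 1 :=
    (Metric.ball_subset_ball (min_le_left _ _)).trans hball₀
  have hBV : B ⊆ V := fun p hp => (hBO hp).1
  -- bound |6 q p - 2 p.1| ≤ M on B
  set M : ℝ := 8 + 6 * |r| with hMdef
  have hM : 0 < M := by positivity
  have hMb : ∀ p ∈ B, |6 * q p - 2 * p.1| ≤ M := by
    intro p hp
    have h1' : |q p - r| < 1 := by
      have := (hBO hp).2
      simpa [Metric.mem_ball, Real.dist_eq] using this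
    have h2' : |p.1| ≤ 1 := by
      have hn : ‖p‖ < ρ := by
        have := Metric.mem_ball.mp hp
        rwa [show (((0:ℝ), (0:ℝ)) : ℝ × ℝ) = 0 from rfl, dist_zero_right] at this
      have := (norm_fst_le p).trans hn.le
      calc |p.1| = ‖p.1‖ := (Real.norm_eq_abs _).symm
        _ ≤ ρ := this
        _ ≤ 1 := hρ1
    have habs := abs_sub_abs_le_abs_sub (q p) r
    have h3' : |q p| ≤ |r| + 1 := by linarith [abs_nonneg (q p - r)]
    calc |6 * q p - 2 * p.1| ≤ |6 * q p| + |2 * p.1| := abs_sub _ _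
      _ = 6 * |q p| + 2 * |p.1| := by rw [abs_mul, abs_mul]; norm_num
      _ ≤ 6 * (|r| + 1) + 2 * 1 := by
          have := abs_nonneg (q p); nlinarith
      _ ≤ M := by rw [hMdef]; linarith
  -- the set where q_y ≠ 0
  set U : Set (ℝ × ℝ) := B ∩ qy ⁻¹' ({0}ᶜ) with hUdef
  have hUopen : IsOpen U :=
    (hqyC.mono hBV).isOpen_inter_preimage Metric.isOpen_ball isOpen_compl_singleton
  have hUB : U ⊆ B := fun p hp => hp.1
  have hDU : ∀ p ∈ U, 3 * q p * q p + p.2 - 2 * p.1 * q p = 0 := by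
    intro p hp
    have := hqyD p (hBV hp.1)
    exact (mul_eq_zero.mp this).resolve_left hp.2
  have hUbound : ∀ p ∈ U, 1 / M ≤ |qy p| := by
    intro p hp
    have hkey := hDkey p (hBV hp.1) (by
      filter_upwards [hUopen.mem_nhds hp] with p' hp'
      exact hDU p' hp')
    have h1' : qy p * (6 * q p - 2 * p.1) = -1 := by
      rw [hqy_eval]; linarith [hkey]
    have h2' : |qy p| * |6 * q p - 2 * p.1| = 1 := by
      rw [← abs_mul, h1']; norm_num
    have h3' := hMb p (hUB hp)
    rw [div_le_iff₀ hM]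
    nlinarith [abs_nonneg (qy p)]
  -- B ∩ closure U ⊆ U
  have hclos : B ∩ closure U ⊆ U := by
    rintro p ⟨hpB, hpc⟩
    haveI : (𝓝[U] p).NeBot := mem_closure_iff_nhdsWithin_neBot.mp hpc
    have hca : ContinuousAt qy p := hqyC.continuousAt (hV.mem_nhds (hBV hpB))
    have htd : Filter.Tendsto (fun x => |qy x|) (𝓝[U] p) (𝓝 |qy p|) :=
      (hca.continuousWithinAt.tendsto).abs
    have hge : 1 / M ≤ |qy p| :=
      ge_of_tendsto htd (eventually_mem_nhdsWithin.mono fun x hx => hUbound x hx)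
    have : qy p ≠ 0 := by
      intro h0
      rw [h0, abs_zero] at hge
      have : (0:ℝ) < 1 / M := by positivity
      linarith
    exact ⟨hpB, this⟩
  -- U is empty
  have hUempty : ∀ p ∈ B, qy p = 0 := by
    by_contra hcon
    push_neg at hcon
    obtain ⟨x₀, hx₀B, hx₀⟩ := hcon
    have hUne : U.Nonempty := ⟨x₀, hx₀B, hx₀⟩
    have hBconn : IsPreconnected B := (convex_ball _ _).isPreconnected
    have hcover : B ⊆ U ∪ (closure U)ᶜ := by
      intro p hp
      by_cases h : p ∈ closure U
      · exact Or.inl (hclos ⟨hp, h⟩)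
      · exact Or.inr h
    by_cases hv : (B ∩ (closure U)ᶜ).Nonempty
    · obtain ⟨x, -, hxU, hxc⟩ := hBconn U (closure U)ᶜ hUopen isClosed_closure.isOpen_compl
        hcover ⟨x₀, hx₀B, hx₀B, hx₀⟩ hv
      exact hxc (subset_closure hxU)
    · -- B ⊆ U, hence D ≡ 0 on B; contradiction at (0, ρ/2)
      have hBU : ∀ p ∈ B, p ∈ U := by
        intro p hp
        rcases hcover hp with h | h
        · exact h
        · exact absurd ⟨hp, h⟩ (fun hx => hv ⟨p, hx⟩)
      have hp0 : ((0:ℝ), ρ/2) ∈ B := by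
        have hd : dist (((0:ℝ), ρ/2)) (((0:ℝ), (0:ℝ))) = ρ/2 := by
          rw [Prod.dist_eq]
          rw [Real.dist_eq, Real.dist_eq]
          rw [abs_of_nonneg (by linarith : (0:ℝ) ≤ ρ/2 - 0)]
          simp
          linarith
        rw [hBdef, Metric.mem_ball, hd]
        linarith
      have := hDU _ (hBU _ hp0)
      simp only at this
      nlinarith [sq_nonneg (q ((0:ℝ), ρ/2)), hρ]
  -- and q_x also vanishes on B
  have hqx0 : ∀ p ∈ B, qx p = 0 := by
    intro p hp
    by_contra hne
    set N : Set (ℝ × ℝ) := B ∩ qx ⁻¹' ({0}ᶜ) with hNdef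
    have hNopen : IsOpen N :=
      (hqxC.mono hBV).isOpen_inter_preimage Metric.isOpen_ball isOpen_compl_singleton
    have hpN : p ∈ N := ⟨hp, hne⟩
    have hkey := hDkey p (hBV hp) (by
      filter_upwards [hNopen.mem_nhds hpN] with p' hp'
      have := hqxD p' (hBV hp'.1)
      exact (mul_eq_zero.mp this).resolve_left hp'.2)
    rw [← hqy_eval, hUempty p hp] at hkey
    norm_num at hkey
  -- hence q is constant on B
  have hL0 : ∀ p ∈ B, fderiv ℝ q p = 0 := by
    intro p hp
    refine ContinuousLinearMap.ext fun v => ?_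
    rw [ContinuousLinearMap.zero_apply, clm_eval_R2]
    rw [← hqx_eval, ← hqy_eval, hqx0 p hp, hUempty p hp]
    simp
  have h0B : ((0:ℝ), (0:ℝ)) ∈ B := Metric.mem_ball_self hρ
  have hqconst : ∀ p ∈ B, q p = r := by
    intro p hp
    have hmvt := (convex_ball ((0:ℝ), (0:ℝ)) ρ).norm_image_sub_le_of_norm_hasFDerivWithin_le
      (f := q) (f' := fun _ => (0 : ℝ × ℝ →L[ℝ] ℝ)) (C := 0)
      (fun x hx => by
        have := (hqdiff x (hBV hx)).hasFDerivAt
        rw [hL0 x hx] at this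
        exact this.hasFDerivWithinAt)
      (fun x hx => by simp) h0B hp
    have : ‖q p - q ((0:ℝ), (0:ℝ))‖ ≤ 0 := by simpa using hmvt
    have := norm_le_zero_iff.mp this
    rw [hrdef]
    linarith [sub_eq_zero.mp this]
  -- conclusion
  have h00 := hReq ((0:ℝ), (0:ℝ)) h0V
  norm_num at h00
  have e0 : R (0, 0) = r * r * r := by
    have hq0 : q 0 = r := hrdef.symm
    rw [show (((0:ℝ), (0:ℝ)) : ℝ × ℝ) = 0 from rfl]
    rw [show R 0 = R (0, 0) from rfl, h00, ← hrdef]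
  refine ⟨r, ?_, B, Metric.isOpen_ball, h0B, hBV, ?_⟩
  · rw [e0]; ring
  · intro p hp
    have hp' := hReq p (hBV hp)
    rw [hqconst p hp] at hp'
    linear_combination hp' - e0
end

section
/- Fix c ≠ 0 and ε ∈ {1, −1}, and define L : ℝ³ → (ℝ³ →L[ℝ] ℝ³) by letting L(x,y,z) have matrix [[−εx² − c, −x/(2c), x/(2c²)], [−2εxy, −y/c, y/c² + 1], [−2εxz, −z/c, z/c²]]. Then L is a smooth Nijenhuis operator on ℝ³, and for all (x,y,z) and all t ∈ ℝ: det(t·Id − L(x,y,z)) = t³ + t²(εx² + y/c − z/c² + c) + yt + z. -/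
open Matrix Set

set_option maxHeartbeats 1000000

noncomputable section

/-- Points of ℝ³, identified with `Fin 3 → ℝ`. -/
abbrev E3 := Fin 3 → ℝ

/-- Lie bracket of vector fields on ℝ³: `[X,Y](p) = DY(p)(X(p)) − DX(p)(Y(p))`. -/
def VBracket (X Y : E3 → E3) : E3 → E3 :=
  fun p => fderiv ℝ Y p (X p) - fderiv ℝ X p (Y p)

/-- `L` is a Nijenhuis operator on `U`: the Nijenhuis torsion vanishes on
constant vector fields at every point of `U`. -/
def IsNijenhuisOn (L : E3 → (E3 →L[ℝ] E3)) (U : Set E3) : Prop :=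
  ∀ u v : E3, ∀ p ∈ U,
    VBracket (fun q => L q u) (fun q => L q v) p
      - L p (VBracket (fun q => L q u) (fun _ => v) p)
      - L p (VBracket (fun _ => u) (fun q => L q v) p) = 0

/-- Matrix of the operator `L p` in the standard basis. -/
def opMatrix (L : E3 → (E3 →L[ℝ] E3)) (p : E3) : Matrix (Fin 3) (Fin 3) ℝ :=
  LinearMap.toMatrix' (↑(L p) : E3 →ₗ[ℝ] E3)

/-- `σ1, σ2, σ3` are the coefficients of the characteristic polynomial of `L` on `U`:
`det (t·Id − L(p)) = t³ + σ₁(p) t² + σ₂(p) t + σ₃(p)`. -/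
def CharCoeffsOn (L : E3 → (E3 →L[ℝ] E3)) (U : Set E3) (σ1 σ2 σ3 : E3 → ℝ) : Prop :=
  ∀ p ∈ U, ∀ t : ℝ,
    (t • (1 : Matrix (Fin 3) (Fin 3) ℝ) - opMatrix L p).det
      = t ^ 3 + σ1 p * t ^ 2 + σ2 p * t + σ3 p

namespace Aux

def Mf (c ε : ℝ) (p : E3) : Matrix (Fin 3) (Fin 3) ℝ :=
  !![-ε * (p 0) ^ 2 - c, -(p 0) / (2 * c), (p 0) / (2 * c ^ 2);
     -2 * ε * (p 0) * (p 1), -(p 1) / c, (p 1) / c ^ 2 + 1;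
     -2 * ε * (p 0) * (p 2), -(p 2) / c, (p 2) / c ^ 2]

def pr (i : Fin 3) : E3 →L[ℝ] ℝ := ContinuousLinearMap.proj i

def lof (a b d : ℝ) : E3 →L[ℝ] ℝ := a • pr 0 + b • pr 1 + d • pr 2

@[simp] lemma lof_apply (a b d : ℝ) (w : E3) :
    lof a b d w = a * w 0 + b * w 1 + d * w 2 := by
  simp [lof, pr, smul_eq_mul]

def Dop (c ε : ℝ) (p u : E3) : E3 →L[ℝ] E3 :=
  ContinuousLinearMap.pi
    ![lof (-2*ε*p 0*u 0 - u 1/(2*c) + u 2/(2*c^2)) 0 0,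
      lof (-2*ε*p 1*u 0) (-2*ε*p 0*u 0 - u 1/c + u 2/c^2) 0,
      lof (-2*ε*p 2*u 0) 0 (-2*ε*p 0*u 0 - u 1/c + u 2/c^2)]

@[simp] lemma Dop_apply (c ε : ℝ) (p u w : E3) (i : Fin 3) :
    Dop c ε p u w i =
      ![(-2*ε*p 0*u 0 - u 1/(2*c) + u 2/(2*c^2)) * w 0,
        (-2*ε*p 1*u 0) * w 0 + (-2*ε*p 0*u 0 - u 1/c + u 2/c^2) * w 1,
        (-2*ε*p 2*u 0) * w 0 + (-2*ε*p 0*u 0 - u 1/c + u 2/c^2) * w 2] i := by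
  fin_cases i <;>
    simp only [Dop, ContinuousLinearMap.pi_apply, Fin.isValue, Matrix.cons_val_zero, Fin.zero_eta, Fin.mk_one, Fin.reduceFinMk,
      Matrix.cons_val_one, Matrix.head_cons, Matrix.cons_val_two, Matrix.tail_cons,
      lof_apply] <;> ring

lemma hasFDerivAt_congr' {f g : E3 → ℝ} {D D' : E3 →L[ℝ] ℝ} {p : E3}
    (h : HasFDerivAt f D p) (hfg : g = f) (hD : D' = D) : HasFDerivAt g D' p := by
  subst hfg hD; exact h

lemma hq (j : Fin 3) (p : E3) : HasFDerivAt (fun q : E3 => q j) (pr j) p :=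
  hasFDerivAt_apply j p

lemma quad0 (A B C : ℝ) (p : E3) :
    HasFDerivAt (fun q : E3 => A * (q 0 * q 0) + B * q 0 + C)
      ((2 * A * p 0 + B) • pr 0) p := by
  have h := ((((hq 0 p).mul (hq 0 p)).const_mul A).add ((hq 0 p).const_mul B)).add_const C
  refine hasFDerivAt_congr' h rfl ?_
  ext w
  simp [pr, smul_eq_mul]
  ring

lemma bil (j : Fin 3) (A B C : ℝ) (p : E3) :
    HasFDerivAt (fun q : E3 => A * (q 0 * q j) + B * q j + C)
      ((A * p j) • pr 0 + (A * p 0 + B) • pr j) p := by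
  have h := ((((hq 0 p).mul (hq j p)).const_mul A).add ((hq j p).const_mul B)).add_const C
  refine hasFDerivAt_congr' h rfl ?_
  ext w
  simp [pr, smul_eq_mul]
  ring

lemma hasFDerivAt_field (c ε : ℝ) (u p : E3) :
    HasFDerivAt (fun q => (Mf c ε q).mulVec u) (Dop c ε p u) p := by
  apply hasFDerivAt_pi'.mpr
  intro i
  fin_cases i
  · refine hasFDerivAt_congr'
      (quad0 (-ε * u 0) (-(u 1)/(2*c) + u 2/(2*c^2)) (-c * u 0) p) ?_ ?_
    · funext q
      simp [Mf, Matrix.mulVec, dotProduct, Fin.sum_univ_three]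
      ring
    · ext w
      simp only [ContinuousLinearMap.coe_comp', Function.comp_apply,
        ContinuousLinearMap.proj_apply, ContinuousLinearMap.add_apply,
        ContinuousLinearMap.coe_smul', Pi.smul_apply, Dop_apply, lof_apply, pr,
        Matrix.cons_val_zero, Fin.zero_eta, Fin.mk_one, Fin.reduceFinMk, Matrix.cons_val_one, Matrix.head_cons, Matrix.cons_val_two,
        Matrix.tail_cons, smul_eq_mul, Fin.isValue]
      ring
  · refine hasFDerivAt_congr'
      (bil 1 (-2*ε*u 0) (-(u 1)/c + u 2/c^2) (u 2) p) ?_ ?_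
    · funext q
      simp [Mf, Matrix.mulVec, dotProduct, Fin.sum_univ_three]
      ring
    · ext w
      simp only [ContinuousLinearMap.coe_comp', Function.comp_apply,
        ContinuousLinearMap.proj_apply, ContinuousLinearMap.add_apply,
        ContinuousLinearMap.coe_smul', Pi.smul_apply, Dop_apply, lof_apply, pr,
        Matrix.cons_val_zero, Fin.zero_eta, Fin.mk_one, Fin.reduceFinMk, Matrix.cons_val_one, Matrix.head_cons, Matrix.cons_val_two,
        Matrix.tail_cons, smul_eq_mul, Fin.isValue]
      ring
  · refine hasFDerivAt_congr'
      (bil 2 (-2*ε*u 0) (-(u 1)/c + u 2/c^2) 0 p) ?_ ?_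
    · funext q
      simp [Mf, Matrix.mulVec, dotProduct, Fin.sum_univ_three]
      ring
    · ext w
      simp only [ContinuousLinearMap.coe_comp', Function.comp_apply,
        ContinuousLinearMap.proj_apply, ContinuousLinearMap.add_apply,
        ContinuousLinearMap.coe_smul', Pi.smul_apply, Dop_apply, lof_apply, pr,
        Matrix.cons_val_zero, Fin.zero_eta, Fin.mk_one, Fin.reduceFinMk, Matrix.cons_val_one, Matrix.head_cons, Matrix.cons_val_two,
        Matrix.tail_cons, smul_eq_mul, Fin.isValue]
      ring



def Eij (i j : Fin 3) : E3 →L[ℝ] E3 := (pr j).smulRight (Pi.single i 1)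

lemma contDiff_entry (c ε : ℝ) (hc : c ≠ 0) (i j : Fin 3) :
    ContDiff ℝ (⊤ : ℕ∞) fun p : E3 => Mf c ε p i j := by
  have hx : ∀ k : Fin 3, ContDiff ℝ (⊤ : ℕ∞) fun p : E3 => p k := fun k =>
    (ContinuousLinearMap.proj k : E3 →L[ℝ] ℝ).contDiff
  fin_cases i <;> fin_cases j <;>
    · simp only [Mf, Matrix.of_apply, Matrix.cons_val', Matrix.cons_val_zero, Fin.zero_eta,
        Fin.mk_one, Fin.reduceFinMk, Matrix.cons_val_one, Matrix.head_cons, Matrix.cons_val_two,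
        Matrix.tail_cons, Matrix.empty_val', Matrix.cons_val_fin_one, Matrix.head_fin_const]
      fun_prop (disch :=
        (rintro _; first
          | exact hc
          | exact mul_ne_zero two_ne_zero hc
          | exact pow_ne_zero _ hc
          | exact mul_ne_zero two_ne_zero (pow_ne_zero _ hc)))

lemma contDiff_field (c ε : ℝ) (hc : c ≠ 0) :
    ContDiff ℝ (⊤ : ℕ∞) fun p : E3 => ∑ i : Fin 3, ∑ j : Fin 3, Mf c ε p i j • Eij i j := by
  apply ContDiff.sum; intro i _
  apply ContDiff.sum; intro j _
  exact (contDiff_entry c ε hc i j).smul contDiff_const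

lemma sum_eij_apply (c ε : ℝ) (p w : E3) :
    (∑ i : Fin 3, ∑ j : Fin 3, Mf c ε p i j • Eij i j) w = (Mf c ε p).mulVec w := by
  funext k
  simp only [ContinuousLinearMap.sum_apply, ContinuousLinearMap.smul_apply, Eij,
    ContinuousLinearMap.smulRight_apply, pr, ContinuousLinearMap.proj_apply,
    Matrix.mulVec, dotProduct, Fin.sum_univ_three, Pi.add_apply, Finset.sum_apply,
    Pi.smul_apply, smul_eq_mul]
  fin_cases k <;> simp [Pi.single_apply]

end Aux

/-- **Verification.** The explicit family of operators from Theorem 3 (σ₁ Morse case)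
is a smooth Nijenhuis operator on all of ℝ³ with the stated characteristic
polynomial. -/
theorem sigma1_morse_family_is_nijenhuis
    (c : ℝ) (hc : c ≠ 0) (ε : ℝ) (hε : ε = 1 ∨ ε = -1)
    (L : E3 → (E3 →L[ℝ] E3))
    (hLdef : ∀ p : E3, opMatrix L p =
      !![-ε * (p 0) ^ 2 - c, -(p 0) / (2 * c), (p 0) / (2 * c ^ 2);
         -2 * ε * (p 0) * (p 1), -(p 1) / c, (p 1) / c ^ 2 + 1;
         -2 * ε * (p 0) * (p 2), -(p 2) / c, (p 2) / c ^ 2]) :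
    ContDiff ℝ (⊤ : ℕ∞) L ∧ IsNijenhuisOn L Set.univ ∧
    ∀ p : E3, ∀ t : ℝ,
      (t • (1 : Matrix (Fin 3) (Fin 3) ℝ) - opMatrix L p).det
        = t ^ 3 + t ^ 2 * (ε * (p 0) ^ 2 + p 1 / c - p 2 / c ^ 2 + c)
          + p 1 * t + p 2 := by
  have hLp : ∀ q w : E3, L q w = (Aux.Mf c ε q).mulVec w := by
    intro q w
    have h1 : L q w = (opMatrix L q).mulVec w := by
      have h2 := Matrix.toLin'_toMatrix' (↑(L q) : E3 →ₗ[ℝ] E3)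
      conv_lhs => rw [show L q w = (↑(L q) : E3 →ₗ[ℝ] E3) w from rfl, ← h2]
      rw [Matrix.toLin'_apply]
      rfl
    rw [h1, hLdef q]
    rfl
  refine ⟨?_, ?_, ?_⟩
  · have hEq : L = fun p => ∑ i : Fin 3, ∑ j : Fin 3, Aux.Mf c ε p i j • Aux.Eij i j := by
      funext p
      apply ContinuousLinearMap.ext
      intro w
      rw [hLp p w, Aux.sum_eij_apply]
    rw [hEq]
    exact Aux.contDiff_field c ε hc
  · intro u v p _
    have hfun : ∀ u : E3, (fun q => L q u) = fun q => (Aux.Mf c ε q).mulVec u :=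
      fun u => funext fun q => hLp q u
    simp only [VBracket, hfun]
    rw [(Aux.hasFDerivAt_field c ε u p).fderiv, (Aux.hasFDerivAt_field c ε v p).fderiv]
    simp only [fderiv_const_apply, ContinuousLinearMap.zero_apply, zero_sub, sub_zero, hLp]
    funext k
    fin_cases k <;>
      · simp [Aux.Mf, Matrix.mulVec, dotProduct, Fin.sum_univ_three, Pi.sub_apply, Pi.neg_apply,
          Pi.zero_apply, Matrix.vecHead, Matrix.vecTail]
        field_simp
        ring
  · intro p t
    rw [hLdef p]
    simp [Matrix.det_fin_three, Matrix.sub_apply, Matrix.smul_apply, Matrix.one_apply,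
      smul_eq_mul]
    field_simp
    ring
end
end

section
/- Fix c ≠ 0 and ε ∈ {1, −1}, and define L : ℝ³ → (ℝ³ →L[ℝ] ℝ³) by letting L(x,y,z) have matrix [[−x + c, 2εy, 1/c], [−y/2, −c, 0], [−z, 0, 0]]. Then L is a smooth Nijenhuis operator on ℝ³, and for all (x,y,z) and all t ∈ ℝ: det(t·Id − L(x,y,z)) = t³ + xt² + (εy² + cx + z/c − c²)t + z. -/
open Matrix Set

noncomputable section

/-- Interpret a 3×3 matrix as a continuous linear map on `E3`. -/
def mclm (A : Matrix (Fin 3) (Fin 3) ℝ) : E3 →L[ℝ] E3 :=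
  (Matrix.toLin' A).toContinuousLinearMap

lemma mclm_apply (A : Matrix (Fin 3) (Fin 3) ℝ) (u : E3) : mclm A u = A.mulVec u := by
  simp [mclm, Matrix.toLin'_apply]

/-- **Verification.** The explicit family of operators from Theorem 4 (σ₂ Morse case)
is a smooth Nijenhuis operator on all of ℝ³ with the stated characteristic
polynomial. -/
theorem sigma2_morse_family_is_nijenhuis
    (c : ℝ) (hc : c ≠ 0) (ε : ℝ) (hε : ε = 1 ∨ ε = -1)
    (L : E3 → (E3 →L[ℝ] E3))
    (hLdef : ∀ p : E3, opMatrix L p =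
      !![-(p 0) + c, 2 * ε * (p 1), 1 / c;
         -(p 1) / 2, -c, 0;
         -(p 2), 0, 0]) :
    ContDiff ℝ (⊤ : ℕ∞) L ∧ IsNijenhuisOn L Set.univ ∧
    ∀ p : E3, ∀ t : ℝ,
      (t • (1 : Matrix (Fin 3) (Fin 3) ℝ) - opMatrix L p).det
        = t ^ 3 + p 0 * t ^ 2
          + (ε * (p 1) ^ 2 + c * p 0 + p 2 / c - c ^ 2) * t + p 2 := by
  have hLu : ∀ p u : E3, L p u = (opMatrix L p).mulVec u := by
    intro p u
    have h : (↑(L p) : E3 →ₗ[ℝ] E3) = Matrix.toLin' (opMatrix L p) := by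
      simp [opMatrix]
    calc L p u = (↑(L p) : E3 →ₗ[ℝ] E3) u := rfl
      _ = (opMatrix L p).mulVec u := by rw [h, Matrix.toLin'_apply]
  set A0 : E3 →L[ℝ] E3 := mclm !![c, 0, 1/c; 0, -c, 0; 0, 0, 0] with hA0
  set B0 : E3 →L[ℝ] E3 := mclm !![-1, 0, 0; 0, 0, 0; 0, 0, 0] with hB0
  set B1 : E3 →L[ℝ] E3 := mclm !![0, 2*ε, 0; -(1/2), 0, 0; 0, 0, 0] with hB1
  set B2 : E3 →L[ℝ] E3 := mclm !![0, 0, 0; 0, 0, 0; -1, 0, 0] with hB2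
  have hLdecomp : ∀ p : E3, L p = A0 + p 0 • B0 + p 1 • B1 + p 2 • B2 := by
    intro p
    ext u i
    have h := hLu p u
    rw [hLdef p] at h
    fin_cases i <;>
      simp [h, hA0, hB0, hB1, hB2, mclm_apply, Matrix.mulVec, dotProduct,
        Fin.sum_univ_three] <;> ring
  -- the derivative of q ↦ L q u
  set G : E3 → (E3 →L[ℝ] E3) := fun u =>
    (ContinuousLinearMap.proj (R := ℝ) (φ := fun _ : Fin 3 => ℝ) 0).smulRight (B0 u)
    + (ContinuousLinearMap.proj (R := ℝ) (φ := fun _ : Fin 3 => ℝ) 1).smulRight (B1 u)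
    + (ContinuousLinearMap.proj (R := ℝ) (φ := fun _ : Fin 3 => ℝ) 2).smulRight (B2 u)
    with hG
  have hGapp : ∀ u w : E3, G u w = w 0 • B0 u + w 1 • B1 u + w 2 • B2 u := by
    intro u w; simp [hG]
  have hfderiv : ∀ u p : E3, fderiv ℝ (fun q => L q u) p = G u := by
    intro u p
    have hfun : (fun q => L q u) = fun q => A0 u + G u q := by
      funext q
      rw [hLdecomp q, hGapp]
      simp [add_assoc]
    rw [hfun]
    exact (((G u).hasFDerivAt).const_add (A0 u)).fderiv
  refine ⟨?_, ?_, ?_⟩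
  · have : L = fun p => A0 + p 0 • B0 + p 1 • B1 + p 2 • B2 := funext hLdecomp
    rw [this]
    exact ((((contDiff_const.add
        (((ContinuousLinearMap.proj (R := ℝ) (φ := fun _ : Fin 3 => ℝ) 0).contDiff).smul
          contDiff_const)).add
        (((ContinuousLinearMap.proj (R := ℝ) (φ := fun _ : Fin 3 => ℝ) 1).contDiff).smul
          contDiff_const)).add
        (((ContinuousLinearMap.proj (R := ℝ) (φ := fun _ : Fin 3 => ℝ) 2).contDiff).smul
          contDiff_const)))
  · intro u v p _
    have hLc : ∀ w : E3, L p w =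
        ![(-(p 0) + c) * w 0 + 2 * ε * p 1 * w 1 + (1/c) * w 2,
          -(p 1)/2 * w 0 - c * w 1, -(p 2) * w 0] := by
      intro w
      rw [hLu p w, hLdef p]
      funext i
      fin_cases i <;>
        simp [Matrix.mulVec, dotProduct, Fin.sum_univ_three] <;> ring
    have hGc : ∀ u w : E3, G u w =
        ![-(w 0) * u 0 + 2 * ε * w 1 * u 1, -(w 1) * u 0 / 2, -(w 2) * u 0] := by
      intro u w
      rw [hGapp]
      funext i
      fin_cases i <;>
        simp [hB0, hB1, hB2, mclm_apply, Matrix.mulVec, dotProduct,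
          Fin.sum_univ_three] <;> ring
    unfold VBracket
    rw [hfderiv u p, hfderiv v p, fderiv_fun_const]
    simp only [Pi.zero_apply, ContinuousLinearMap.zero_apply, zero_sub, sub_zero]
    rw [map_neg]
    funext i
    simp only [Pi.sub_apply, Pi.zero_apply, Pi.neg_apply]
    rw [hGc, hGc, hLc u, hLc v, hGc u v, hGc v u, hLc, hLc]
    fin_cases i <;> simp [Matrix.vecHead, Matrix.vecTail] <;> ring
  · intro p t
    rw [hLdef p]
    have h2 : (t • (1 : Matrix (Fin 3) (Fin 3) ℝ) -
        !![-(p 0) + c, 2 * ε * (p 1), 1 / c;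
           -(p 1) / 2, -c, 0;
           -(p 2), 0, 0]) =
        !![t + p 0 - c, -(2 * ε * p 1), -(1/c);
           p 1 / 2, t + c, 0;
           p 2, 0, t] := by
      ext i j
      fin_cases i <;> fin_cases j <;>
        simp [Matrix.one_apply, Matrix.vecHead, Matrix.vecTail] <;> ring
    rw [h2, Matrix.det_fin_three]
    simp [Matrix.vecHead, Matrix.vecTail]
    field_simp
    ring
end
end

section
/- Fix c ∈ ℝ and ε ∈ {1, −1}, and define L : ℝ³ → (ℝ³ →L[ℝ] ℝ³) by letting L(x,y,z) have matrix [[−x, 1, 0], [−y − c^{2/3}, c^{1/3}, 2εz], [−z/2, 0, −c^{1/3}]], where c^{1/3} denotes the real cube root of c and c^{2/3} = (c^{1/3})². Then L is a smooth Nijenhuis operator on ℝ³, and for all (x,y,z) and all t ∈ ℝ: det(t·Id − L(x,y,z)) = t³ + xt² + yt + εz² + c^{1/3}y − c^{2/3}x + c. -/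
open Matrix Set

noncomputable section

/-- **Verification.** The explicit family of operators from Theorem 5 (σ₃ Morse case)
is a smooth Nijenhuis operator on all of ℝ³ with the stated characteristic polynomial.
Here `r` is the real cube root of `c` (i.e. `r³ = c`), so `r = c^(1/3)`,
`r² = c^(2/3)`. -/
theorem sigma3_morse_family_is_nijenhuis
    (c : ℝ) (r : ℝ) (hr : r ^ 3 = c) (ε : ℝ) (hε : ε = 1 ∨ ε = -1)
    (L : E3 → (E3 →L[ℝ] E3))
    (hLdef : ∀ p : E3, opMatrix L p =
      !![-(p 0), 1, 0;
         -(p 1) - r ^ 2, r, 2 * ε * (p 2);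
         -(p 2) / 2, 0, -r]) :
    ContDiff ℝ (⊤ : ℕ∞) L ∧ IsNijenhuisOn L Set.univ ∧
    ∀ p : E3, ∀ t : ℝ,
      (t • (1 : Matrix (Fin 3) (Fin 3) ℝ) - opMatrix L p).det
        = t ^ 3 + p 0 * t ^ 2 + p 1 * t
          + ε * (p 2) ^ 2 + r * p 1 - r ^ 2 * p 0 + c := by
  subst hr
  have key : ∀ p u, L p u =
      (!![-(p 0), 1, 0;
         -(p 1) - r ^ 2, r, 2 * ε * (p 2);
         -(p 2) / 2, 0, -r]).mulVec u := by
    intro p u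
    have h1 : Matrix.toLin' (opMatrix L p) = (↑(L p) : E3 →ₗ[ℝ] E3) :=
      Matrix.toLin'_toMatrix' _
    rw [← hLdef p, ← Matrix.toLin'_apply, h1]
    rfl
  refine ⟨?_, ?_, ?_⟩
  · -- smoothness
    have hL : L = fun p =>
        LinearMap.toContinuousLinearMap
          (Matrix.mulVecLin (!![0, 1, 0; -r ^ 2, r, 0; 0, 0, -r]))
        + p 0 • LinearMap.toContinuousLinearMap
            (Matrix.mulVecLin (!![-1, 0, 0; 0, 0, 0; 0, 0, 0]))
        + p 1 • LinearMap.toContinuousLinearMap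
            (Matrix.mulVecLin (!![0, 0, 0; -1, 0, 0; 0, 0, 0]))
        + p 2 • LinearMap.toContinuousLinearMap
            (Matrix.mulVecLin (!![0, 0, 0; 0, 0, 2 * ε; -1/2, 0, 0])) := by
      funext p
      ext u i
      rw [key]
      fin_cases i <;>
        simp [Matrix.mulVec, dotProduct, Fin.sum_univ_three] <;> ring
    rw [hL]
    refine ((contDiff_const.add ?_).add ?_).add ?_ <;>
      exact ((ContinuousLinearMap.proj _ : E3 →L[ℝ] ℝ).contDiff).smul contDiff_const
  · -- Nijenhuis
    set D : E3 → (E3 →L[ℝ] E3) := fun u =>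
      (ContinuousLinearMap.proj 0).smulRight ![-u 0, 0, 0]
      + (ContinuousLinearMap.proj 1).smulRight ![0, -u 0, 0]
      + (ContinuousLinearMap.proj 2).smulRight ![0, 2 * ε * u 2, -u 0 / 2] with hD
    have hDapp : ∀ u q, D u q =
        ![-(q 0) * u 0, -(q 1) * u 0 + 2 * ε * (q 2) * u 2, -(q 2) / 2 * u 0] := by
      intro u q
      funext i
      fin_cases i <;>
        simp [hD, Matrix.smul_cons, Matrix.smul_empty] <;> ring
    have hfd : ∀ u p, fderiv ℝ (fun q => L q u) p = D u := by
      intro u p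
      have heq : (fun q => L q u) = fun q =>
          (!![0, 1, 0; -r ^ 2, r, 0; 0, 0, -r]).mulVec u + D u q := by
        funext q
        rw [key]
        funext i
        rw [hDapp]
        fin_cases i <;>
          simp [Matrix.mulVec, dotProduct, Fin.sum_univ_three] <;> ring
      rw [heq]
      exact (((D u).hasFDerivAt).const_add _).fderiv
    intro u v p _
    unfold VBracket
    rw [hfd u p, hfd v p, fderiv_fun_const, key, key]
    simp only [Pi.zero_apply, ContinuousLinearMap.zero_apply, zero_sub,
      map_neg, hDapp, key]
    funext i
    fin_cases i <;>
      simp [Matrix.mulVec, dotProduct, Fin.sum_univ_three, Matrix.vecHead,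
        Matrix.vecTail, Function.comp] <;> ring
  · intro p t
    rw [hLdef p]
    simp [Matrix.det_fin_three, Matrix.one_apply]
    ring
end
end

section
/- Fix c ∈ ℝ and ε ∈ {1, −1}, and define L : ℝ³ → (ℝ³ →L[ℝ] ℝ³) by letting L(u,v,w) have matrix [[c + εu², 0, 0], [0, v, 1], [0, w, 0]]. Then L is a smooth Nijenhuis operator on ℝ³. -/
open Matrix Set

noncomputable section

noncomputable def toCLM (M : Matrix (Fin 3) (Fin 3) ℝ) : E3 →L[ℝ] E3 :=
  LinearMap.toContinuousLinearMap (Matrix.toLin' M)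

lemma toCLM_apply (M : Matrix (Fin 3) (Fin 3) ℝ) (x : E3) : toCLM M x = M.mulVec x := by
  simp [toCLM]

/-- **Verification.** The block-diagonal family `diag(c + εu², [[v,1],[w,0]])` is a
smooth Nijenhuis operator on all of ℝ³. -/
theorem split_family_is_nijenhuis
    (c : ℝ) (ε : ℝ) (hε : ε = 1 ∨ ε = -1)
    (L : E3 → (E3 →L[ℝ] E3))
    (hLdef : ∀ p : E3, opMatrix L p =
      !![c + ε * (p 0) ^ 2, 0, 0;
         0, p 1, 1;
         0, p 2, 0]) :
    ContDiff ℝ (⊤ : ℕ∞) L ∧ IsNijenhuisOn L Set.univ := by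
  obtain ⟨A, hAx⟩ : ∃ A : E3 →L[ℝ] E3, ∀ x : E3, A x = ![c * x 0, x 2, 0] :=
    ⟨toCLM !![c, 0, 0; 0, 0, 1; 0, 0, 0], by
      intro x; funext i; fin_cases i <;>
        simp [toCLM_apply, Matrix.mulVec, dotProduct, Fin.sum_univ_three, Matrix.vecHead, Matrix.vecTail]⟩
  obtain ⟨B, hBx⟩ : ∃ B : E3 →L[ℝ] E3, ∀ x : E3, B x = ![ε * x 0, 0, 0] :=
    ⟨toCLM !![ε, 0, 0; 0, 0, 0; 0, 0, 0], by
      intro x; funext i; fin_cases i <;>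
        simp [toCLM_apply, Matrix.mulVec, dotProduct, Fin.sum_univ_three, Matrix.vecHead, Matrix.vecTail]⟩
  obtain ⟨C, hCx⟩ : ∃ C : E3 →L[ℝ] E3, ∀ x : E3, C x = ![0, x 1, 0] :=
    ⟨toCLM !![0, 0, 0; 0, 1, 0; 0, 0, 0], by
      intro x; funext i; fin_cases i <;>
        simp [toCLM_apply, Matrix.mulVec, dotProduct, Fin.sum_univ_three, Matrix.vecHead, Matrix.vecTail]⟩
  obtain ⟨D, hDx⟩ : ∃ D : E3 →L[ℝ] E3, ∀ x : E3, D x = ![0, 0, x 1] :=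
    ⟨toCLM !![0, 0, 0; 0, 0, 0; 0, 1, 0], by
      intro x; funext i; fin_cases i <;>
        simp [toCLM_apply, Matrix.mulVec, dotProduct, Fin.sum_univ_three, Matrix.vecHead, Matrix.vecTail]⟩
  have happ : ∀ p x, L p x = (!![c + ε * (p 0) ^ 2, 0, 0;
         0, p 1, 1;
         0, p 2, 0]).mulVec x := by
    intro p x
    rw [← hLdef p]
    unfold opMatrix
    rw [← Matrix.toLin'_apply, Matrix.toLin'_toMatrix']
    rfl
  have hLp : ∀ p, L p = A + (p 0 * p 0) • B + (p 1) • C + (p 2) • D := by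
    intro p
    ext x i
    rw [happ]
    fin_cases i <;>
      simp [hAx, hBx, hCx, hDx, Matrix.mulVec, dotProduct, Fin.sum_univ_three, Matrix.vecHead, Matrix.vecTail] <;>
      ring
  have h0 : ContDiff ℝ (⊤ : ℕ∞) (fun p : E3 => p 0) := contDiff_pi.mp contDiff_id 0
  have h1 : ContDiff ℝ (⊤ : ℕ∞) (fun p : E3 => p 1) := contDiff_pi.mp contDiff_id 1
  have h2 : ContDiff ℝ (⊤ : ℕ∞) (fun p : E3 => p 2) := contDiff_pi.mp contDiff_id 2
  constructor
  · have : L = fun p => A + (p 0 * p 0) • B + (p 1) • C + (p 2) • D := funext hLp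
    rw [this]
    exact (((contDiff_const.add ((h0.mul h0).smul contDiff_const)).add
      (h1.smul contDiff_const)).add (h2.smul contDiff_const))
  · intro u v p _
    have hfd : ∀ w : E3, HasFDerivAt (fun q => L q w)
        (((p 0 • (ContinuousLinearMap.proj (R := ℝ) (φ := fun _ : Fin 3 => ℝ) 0)
            + p 0 • (ContinuousLinearMap.proj (R := ℝ) (φ := fun _ : Fin 3 => ℝ) 0))).smulRight (B w)
          + (ContinuousLinearMap.proj (R := ℝ) (φ := fun _ : Fin 3 => ℝ) 1).smulRight (C w)
          + (ContinuousLinearMap.proj (R := ℝ) (φ := fun _ : Fin 3 => ℝ) 2).smulRight (D w)) p := by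
      intro w
      have e : (fun q => L q w)
          = fun q : E3 => (A w + (q 0 * q 0) • B w) + (q 1) • C w + (q 2) • D w := by
        funext q; rw [hLp q]; simp
      rw [e]
      have hp0 : HasFDerivAt (fun q : E3 => q 0)
          (ContinuousLinearMap.proj (R := ℝ) (φ := fun _ : Fin 3 => ℝ) 0) p :=
        (ContinuousLinearMap.proj (R := ℝ) (φ := fun _ : Fin 3 => ℝ) 0).hasFDerivAt
      have hp1 : HasFDerivAt (fun q : E3 => q 1)
          (ContinuousLinearMap.proj (R := ℝ) (φ := fun _ : Fin 3 => ℝ) 1) p :=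
        (ContinuousLinearMap.proj (R := ℝ) (φ := fun _ : Fin 3 => ℝ) 1).hasFDerivAt
      have hp2 : HasFDerivAt (fun q : E3 => q 2)
          (ContinuousLinearMap.proj (R := ℝ) (φ := fun _ : Fin 3 => ℝ) 2) p :=
        (ContinuousLinearMap.proj (R := ℝ) (φ := fun _ : Fin 3 => ℝ) 2).hasFDerivAt
      exact ((((hp0.mul hp0).smul_const (B w)).const_add (A w)).add
        (hp1.smul_const (C w))).add (hp2.smul_const (D w))
    have hXu := hfd u
    have hXv := hfd v
    simp only [VBracket, hXu.fderiv, hXv.fderiv, fderiv_const, Pi.zero_apply,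
      ContinuousLinearMap.zero_apply, ContinuousLinearMap.add_apply,
      ContinuousLinearMap.smulRight_apply, ContinuousLinearMap.smul_apply,
      ContinuousLinearMap.proj_apply, zero_sub, sub_zero]
    funext i
    fin_cases i <;>
      simp [hAx, hBx, hCx, hDx, happ, Matrix.mulVec, dotProduct,
        Fin.sum_univ_three, Matrix.vecHead, Matrix.vecTail, smul_eq_mul] <;> ring
end
end

section
/- Let I ⊆ ℝ be an open interval and let a, f, g : I → ℝ be smooth functions satisfying, for all x ∈ I: a(x) = x − f'(x), f'(x)·a(x) = f(x) + g'(x), and g'(x)·a(x) = g(x). Then for all x ∈ I: (x − f'(x))·(x − 2f'(x))·f''(x) = (f'(x)·(x − f'(x)) − f(x))·f''(x). Moreover, if x₀ ∈ I and f''(x₀) ≠ 0, then (2x − 3f'(x))² = x² − 3f(x) holds for all x in some neighborhood of x₀. -/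
open Set

/-- **Theorem.** For smooth solutions of `a = x − f'`, `f'a = f + g'`, `g'a = g` on an
open interval one has `(x − f')(x − 2f')f'' = (f'(x − f') − f)f''`; moreover near any
point where `f'' ≠ 0` the identity `(2x − 3f')² = x² − 3f` holds. -/
theorem ode_system_second_order_identity
    (I : Set ℝ) (hIopen : IsOpen I) (hIconn : I.OrdConnected)
    (a f g : ℝ → ℝ)
    (ha : ContDiffOn ℝ (⊤ : ℕ∞) a I) (hf : ContDiffOn ℝ (⊤ : ℕ∞) f I) (hg : ContDiffOn ℝ (⊤ : ℕ∞) g I)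
    (h1 : ∀ x ∈ I, a x = x - deriv f x)
    (h2 : ∀ x ∈ I, deriv f x * a x = f x + deriv g x)
    (h3 : ∀ x ∈ I, deriv g x * a x = g x) :
    (∀ x ∈ I,
      (x - deriv f x) * (x - 2 * deriv f x) * deriv (deriv f) x
        = (deriv f x * (x - deriv f x) - f x) * deriv (deriv f) x) ∧
    ∀ x₀ ∈ I, deriv (deriv f) x₀ ≠ 0 →
      ∃ ε : ℝ, 0 < ε ∧ Ioo (x₀ - ε) (x₀ + ε) ⊆ I ∧
        ∀ x ∈ Ioo (x₀ - ε) (x₀ + ε),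
          (2 * x - 3 * deriv f x) ^ 2 = x ^ 2 - 3 * f x := by
  -- Differentiability facts
  have hf' : ContDiffOn ℝ (⊤ : ℕ∞) (deriv f) I := hf.deriv_of_isOpen hIopen (by simp)
  have hg' : ContDiffOn ℝ (⊤ : ℕ∞) (deriv g) I := hg.deriv_of_isOpen hIopen (by simp)
  have hfd1 : ∀ x ∈ I, DifferentiableAt ℝ f x := fun x hx =>
    (hf.differentiableOn (by simp)).differentiableAt (hIopen.mem_nhds hx)
  have hfd2 : ∀ x ∈ I, DifferentiableAt ℝ (deriv f) x := fun x hx =>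
    (hf'.differentiableOn (by simp)).differentiableAt (hIopen.mem_nhds hx)
  have hgd2 : ∀ x ∈ I, DifferentiableAt ℝ (deriv g) x := fun x hx =>
    (hg'.differentiableOn (by simp)).differentiableAt (hIopen.mem_nhds hx)
  -- algebraic consequences
  have eA : ∀ x ∈ I, deriv g x = deriv f x * (x - deriv f x) - f x := by
    intro x hx
    have h2' := h2 x hx
    rw [h1 x hx] at h2'
    linarith
  have eB : ∀ x ∈ I, g x = deriv g x * (x - deriv f x) := by
    intro x hx
    have h3' := h3 x hx
    rw [h1 x hx] at h3'
    linarith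
  -- derivative of eB : g' = g''(x - f') + g'(1 - f'')
  have eD : ∀ x ∈ I, deriv g x = deriv (deriv g) x * (x - deriv f x)
      + deriv g x * (1 - deriv (deriv f) x) := by
    intro x hx
    have heq : g =ᶠ[nhds x] fun y => deriv g y * (y - deriv f y) :=
      Filter.eventuallyEq_of_mem (hIopen.mem_nhds hx) eB
    have hder : HasDerivAt (fun y => deriv g y * (y - deriv f y))
        (deriv (deriv g) x * (x - deriv f x) + deriv g x * (1 - deriv (deriv f) x)) x :=
      ((hgd2 x hx).hasDerivAt).mul ((hasDerivAt_id x).sub ((hfd2 x hx).hasDerivAt))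
    calc deriv g x
        = deriv (fun y => deriv g y * (y - deriv f y)) x := by rw [← heq.deriv_eq]
      _ = _ := hder.deriv
  -- derivative of eA : g'' = f''(x - f') + f'(1 - f'') - f'
  have eC : ∀ x ∈ I, deriv (deriv g) x = deriv (deriv f) x * (x - deriv f x)
      + deriv f x * (1 - deriv (deriv f) x) - deriv f x := by
    intro x hx
    have heq : deriv g =ᶠ[nhds x] fun y => deriv f y * (y - deriv f y) - f y :=
      Filter.eventuallyEq_of_mem (hIopen.mem_nhds hx) eA
    have hder : HasDerivAt (fun y => deriv f y * (y - deriv f y) - f y)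
        (deriv (deriv f) x * (x - deriv f x) + deriv f x * (1 - deriv (deriv f) x)
          - deriv f x) x :=
      (((hfd2 x hx).hasDerivAt).mul ((hasDerivAt_id x).sub ((hfd2 x hx).hasDerivAt))).sub
        ((hfd1 x hx).hasDerivAt)
    calc deriv (deriv g) x
        = deriv (fun y => deriv f y * (y - deriv f y) - f y) x := heq.deriv_eq
      _ = _ := hder.deriv
  -- first identity
  have main : ∀ x ∈ I,
      (x - deriv f x) * (x - 2 * deriv f x) * deriv (deriv f) x
        = (deriv f x * (x - deriv f x) - f x) * deriv (deriv f) x := by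
    intro x hx
    have e1 := eA x hx
    have e2 := eC x hx
    have e3 := eD x hx
    linear_combination deriv (deriv f) x * e1 - e3 - (x - deriv f x) * e2
  refine ⟨main, ?_⟩
  intro x₀ hx₀ hne
  have hcont : ContinuousAt (deriv (deriv f)) x₀ :=
    ((hf'.continuousOn_deriv_of_isOpen hIopen (by simp)).continuousAt (hIopen.mem_nhds hx₀))
  have hnhds : {x | deriv (deriv f) x ≠ 0} ∩ I ∈ nhds x₀ :=
    Filter.inter_mem (hcont.eventually_ne hne) (hIopen.mem_nhds hx₀)
  obtain ⟨ε, hε, hball⟩ := Metric.mem_nhds_iff.1 hnhds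
  refine ⟨ε, hε, ?_, ?_⟩
  · intro x hx
    rw [← Real.ball_eq_Ioo] at hx
    exact (hball hx).2
  · intro x hx
    rw [← Real.ball_eq_Ioo] at hx
    obtain ⟨hxne, hxI⟩ := hball hx
    have hm := main x hxI
    have := mul_right_cancel₀ hxne hm
    linear_combination 3 * this
end
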